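/- Counterexample to the unbounded set Lyapunov rule: for the ODE y' = y, t' = 1 on ℝ², the closed invariant set P = {(y,t) : y = 0} and the function v(y,t) = y²·exp(-2t) satisfy v = 0 on P, v > 0 off P, and the Lie derivative of v along the ODE is identically 0; yet P is not stable: for every δ > 0 there is an initial state (y₀, t₀) with |y₀| < δ, y₀ ≠ 0, whose solution satisfies dist((y(s), t(s)), P) = |y₀|·exp(s) → ∞, so it eventually exceeds any fixed ε. -/
import Mathlib

open Real Filter Topology

noncomputable section

/-- Candidate Lyapunov function for the counterexample ODE y' = y, t' = 1. -/
def vCex (y t : ℝ) : ℝ := y^2 * Real.exp (-2 * t)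

theorem stmt_14 :
    -- v = 0 on P = {y = 0} and v > 0 off P
    (∀ t : ℝ, vCex 0 t = 0) ∧
    (∀ y t : ℝ, y ≠ 0 → 0 < vCex y t) ∧
    -- Lie derivative of v along the vector field (y, 1) is identically 0
    (∀ y t : ℝ,
      deriv (fun y' => vCex y' t) y * y + deriv (fun t' => vCex y t') t * 1 = 0) ∧
    -- yet P is not stable: arbitrarily close to P there are initial states whose
    -- distance to P, |y₀|·exp(s), tends to ∞ and so eventually exceeds any fixed ε
    (∀ δ > (0:ℝ), ∃ y₀ t₀ : ℝ, |y₀| < δ ∧ y₀ ≠ 0 ∧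
      Tendsto (fun s => |y₀| * Real.exp s) atTop atTop ∧
      ∀ ε > (0:ℝ), ∃ s ≥ (0:ℝ), ε ≤ |y₀| * Real.exp s) := by
  refine ⟨fun t => by simp [vCex], fun y t hy => mul_pos (pow_two_pos_of_ne_zero hy) (Real.exp_pos _), ?_, ?_⟩
  · intro y t
    have h1 : deriv (fun y' => vCex y' t) y = 2 * y * Real.exp (-2 * t) := by
      simp only [vCex]
      rw [deriv_mul_const (by fun_prop)]
      simp [mul_comm]
    have h2 : deriv (fun t' => vCex y t') t = y^2 * (-2 * Real.exp (-2 * t)) := by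
      simp only [vCex]
      rw [deriv_const_mul _ (by fun_prop)]
      have : deriv (fun t' : ℝ => Real.exp (-2 * t')) t = -2 * Real.exp (-2 * t) := by
        rw [show (fun t' : ℝ => Real.exp (-2 * t')) = Real.exp ∘ (fun t' => -2 * t') from rfl,
          deriv_comp _ (Real.differentiable_exp _) (by fun_prop)]
        simp [mul_comm]
      rw [this]
    rw [h1, h2]; ring
  · intro δ hδ
    refine ⟨δ/2, 0, ?_, by positivity, ?_, ?_⟩
    · rw [abs_of_pos (by positivity)]; linarith
    · have : Tendsto Real.exp atTop atTop := Real.tendsto_exp_atTop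
      exact this.const_mul_atTop (by positivity)
    · intro ε hε
      have hab : |δ/2| > 0 := by positivity
      rcases ((Real.tendsto_exp_atTop.const_mul_atTop hab).eventually_ge_atTop ε).and
        (eventually_ge_atTop (0:ℝ)) |>.exists with ⟨s, h1, h2⟩
      exact ⟨s, h2, h1⟩
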